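/- Let M be a simple rank-3 matroid on ground set E. A triangle of M is a triple {F₁, F₂, F₃} of rank-2 flats that pairwise intersect nontrivially but with F₁ ∩ F₂ ∩ F₃ = ∅. If E ≠ F₁ ∪ F₂ ∪ F₃ for every triangle {F₁, F₂, F₃} of M, then I(QAut_ℬ(M)) ⊆ I(QAut_𝒞(M)), i.e. QAut_𝒞(M) ≤ QAut_ℬ(M). -/

import Mathlib

/-!
A generator `u_{AB}` of the basis ideal has, say, `A` a basis tuple, hence of length 3.  If `B`
has no repeated entry, its underlying set is a dependent 3-set, which in a simple matroid is a
circuit, so `u_{AB}` already generates the circuit ideal.  Otherwise, the three lines spanned by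
pairs of entries of `A` pairwise meet in a point of `A` and have empty common intersection
(closures of subsets of an independent set intersect as the subsets do), so they form a
triangle, and by hypothesis some `e` lies on none of them; then `(A, e)` is a circuit tuple.
Using the row relation `∑_d u_{ed} = 1`,
`u_{AB} = ∑_d u_{(A,e)(B,d)} - u_{AB} (∑_d u_{ed} - 1)`,
and every `u_{(A,e)(B,d)}` is a generator of the circuit ideal since `(B, d)` has a repeated
entry.  When `B` is the basis tuple, the same argument runs with the column relation.
-/

noncomputable section

/-- The generator `u_{ij}` of `ℂ⟨E²⟩`. -/
def u (E : Type) (i j : E) : FreeAlgebra ℂ (E × E) :=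
  FreeAlgebra.ι ℂ (i, j)

/-- The defining relations of the quantum symmetric group `𝔖⁺(E)`. -/
def symRels (E : Type) [Fintype E] : Set (FreeAlgebra ℂ (E × E)) :=
  {x | ∃ i j : E, x = u E i j * u E i j - u E i j} ∪
  {x | ∃ i k l : E, k ≠ l ∧ x = u E i k * u E i l} ∪
  {x | ∃ j k l : E, k ≠ l ∧ x = u E k j * u E l j} ∪
  {x | ∃ j : E, x = (∑ k : E, u E k j) - 1} ∪
  {x | ∃ i : E, x = (∑ k : E, u E i k) - 1}

/-- For tuples `A B : Fin k → E`, the (ordered, noncommutative) product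
`u_{AB} = u_{a₁b₁} ⋯ u_{a_k b_k}`. -/
def uProd (E : Type) {k : ℕ} (A B : Fin k → E) : FreeAlgebra ℂ (E × E) :=
  (List.ofFn fun t => u E (A t) (B t)).prod

/-- Tuples of elements of `E` (of arbitrary length). -/
abbrev Tup (E : Type) := Σ k : ℕ, Fin k → E

/-- The elements `u_{AB}` where exactly one of the tuples `A`, `B` lies in `𝒜`. -/
def tupleGens (E : Type) (𝒜 : Set (Tup E)) : Set (FreeAlgebra ℂ (E × E)) :=
  {x | ∃ (k : ℕ) (A B : Fin k → E),
    Xor' (⟨k, A⟩ ∈ 𝒜) (⟨k, B⟩ ∈ 𝒜) ∧ x = uProd E A B}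

/-- The preimage in `ℂ⟨E²⟩` of the ideal `I_𝒜` of `𝔖⁺(E)`. -/
def qIdeal (E : Type) [Fintype E] (𝒜 : Set (Tup E)) :
    TwoSidedIdeal (FreeAlgebra ℂ (E × E)) :=
  TwoSidedIdeal.span (symRels E ∪ tupleGens E 𝒜)

/-- Basis tuples of a matroid: repetition-free tuples whose underlying set is a
basis. -/
def baseTuples {E : Type} (M : Matroid E) : Set (Tup E) :=
  {T | Function.Injective T.2 ∧ M.IsBase (Set.range T.2)}

/-- A circuit of a matroid: a minimal dependent set, i.e. a dependent set all of whose
proper subsets are independent. -/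
def IsCircuitSet {E : Type} (M : Matroid E) (C : Set E) : Prop :=
  ¬ M.Indep C ∧ ∀ a ∈ C, M.Indep (C \ {a})

/-- Circuit tuples of a matroid: either `(a, a)` for a non-loop `a`, or a
repetition-free tuple whose underlying set is a circuit. -/
def circuitTuples {E : Type} (M : Matroid E) : Set (Tup E) :=
  {T | (∃ a : E, M.Indep {a} ∧ T = ⟨2, fun _ => a⟩) ∨
       (Function.Injective T.2 ∧ IsCircuitSet M (Set.range T.2))}

/-- A rank-2 flat: a flat possessing a basis of cardinality 2. -/
def Rank2Flat {E : Type} (M : Matroid E) (F : Set E) : Prop :=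
  M.IsFlat F ∧ ∃ I : Set E, M.IsBasis I F ∧ I.ncard = 2

namespace Matroid

variable {α : Type} {M : Matroid α}

def IsSimple (M : Matroid α) : Prop :=
  (∀ x, M.Indep {x}) ∧ ∀ x y, x ≠ y → M.Indep {x, y}

def NoCoveringTriangle (M : Matroid α) : Prop :=
  ∀ F₁ F₂ F₃ : Set α, Rank2Flat M F₁ → Rank2Flat M F₂ → Rank2Flat M F₃ →
    (F₁ ∩ F₂).Nonempty → (F₁ ∩ F₃).Nonempty → (F₂ ∩ F₃).Nonempty →
    F₁ ∩ F₂ ∩ F₃ = ∅ → F₁ ∪ F₂ ∪ F₃ ≠ Set.univ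

lemma IsCircuit.isCircuitSet {C : Set α} (hC : M.IsCircuit C) : IsCircuitSet M C :=
  ⟨hC.not_indep, fun _ ha => hC.sdiff_singleton_indep ha⟩

lemma Indep.isBase_of_ncard_eq [Finite α] {B I : Set α} (hB : M.IsBase B) (hI : M.Indep I)
    (h : I.ncard = B.ncard) : M.IsBase I := by
  obtain ⟨B', hB', hIB'⟩ := hI.exists_isBase_superset
  rwa [Set.eq_of_subset_of_ncard_le hIB' (by rw [hB'.ncard_eq_ncard_of_isBase hB, h])
    B'.toFinite]

lemma IsSimple.ground_eq_univ (hM : M.IsSimple) : M.E = Set.univ :=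
  Set.eq_univ_of_forall fun x => (hM.1 x).subset_ground rfl

lemma IsSimple.closure_empty (hM : M.IsSimple) : M.closure ∅ = ∅ :=
  Set.eq_empty_of_forall_notMem fun x hx =>
    (hM.1 x).notMem_closure_sdiff_of_mem (Set.mem_singleton x) (by simpa using hx)

lemma IsSimple.isCircuit_of_ncard_eq_three (hM : M.IsSimple) {C : Set α} (hCE : C ⊆ M.E)
    (hC : ¬ M.Indep C) (h3 : C.ncard = 3) : M.IsCircuit C := by
  refine isCircuit_iff_dep_forall_sdiff_singleton_indep.mpr ⟨⟨hC, hCE⟩, fun e he => ?_⟩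
  obtain ⟨x, y, hxy, hC'⟩ :=
    Set.ncard_eq_two.mp (by rw [Set.ncard_sdiff_singleton_of_mem he, h3])
  exact hC' ▸ hM.2 x y hxy

lemma IsSimple.rank2Flat_closure_pair (hM : M.IsSimple) {a b : α} (hab : a ≠ b) :
    Rank2Flat M (M.closure {a, b}) :=
  ⟨M.isFlat_closure _, {a, b}, (hM.2 a b hab).isBasis_closure, Set.ncard_pair hab⟩

lemma IsSimple.closure_pair_inter_inter_eq_empty (hM : M.IsSimple) {a b c : α}
    (h : M.Indep {a, b, c}) (hab : a ≠ b) (hac : a ≠ c) (hbc : b ≠ c) :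
    M.closure {a, b} ∩ M.closure {a, c} ∩ M.closure {b, c} = ∅ := by
  rw [← Indep.closure_inter_eq_inter_closure (h.subset (by grind)),
    ← Indep.closure_inter_eq_inter_closure (h.subset (by grind))]
  convert hM.closure_empty
  grind

lemma IsSimple.exists_isCircuit_insert_of_isBase (hM : M.IsSimple) (htri : M.NoCoveringTriangle)
    {B : Set α} (hB : M.IsBase B) (h3 : B.ncard = 3) :
    ∃ e ∉ B, M.IsCircuit (insert e B) := by
  obtain ⟨a, b, c, hab, hac, hbc, rfl⟩ := Set.ncard_eq_three.mp h3
  have hmem {x y z : α} (h : x ∈ ({y, z} : Set α)) : x ∈ M.closure {y, z} :=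
    M.mem_closure_of_mem' h (by simp [hM.ground_eq_univ])
  obtain ⟨e, he⟩ := (Set.ne_univ_iff_exists_notMem _).mp <|
    htri _ _ _ (hM.rank2Flat_closure_pair hab) (hM.rank2Flat_closure_pair hac)
      (hM.rank2Flat_closure_pair hbc) ⟨a, hmem (by simp), hmem (by simp)⟩
      ⟨b, hmem (by simp), hmem (by simp)⟩ ⟨c, hmem (by simp), hmem (by simp)⟩
      (hM.closure_pair_inter_inter_eq_empty hB.indep hab hac hbc)
  simp only [Set.mem_union, not_or] at he
  obtain ⟨⟨heab, heac⟩, hebc⟩ := he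
  have heB : e ∉ ({a, b, c} : Set α) := by
    rintro (rfl | rfl | rfl)
    exacts [heab (hmem (by simp)), heab (hmem (by simp)), heac (hmem (by simp))]
  refine ⟨e, heB,
    hB.indep.insert_isCircuit_of_forall heB (by simp [hB.closure_eq, hM.ground_eq_univ]) ?_⟩
  rintro f (rfl | rfl | rfl)
  · convert hebc using 3; grind
  · convert heac using 3; grind
  · convert heab using 3; grind

end Matroid

section QIdeal

variable {E : Type}

lemma uProd_snoc {k : ℕ} (A B : Fin k → E) (x y : E) :
    uProd E (Fin.snoc A x) (Fin.snoc B y) = uProd E A B * u E x y := by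
  simp only [uProd, List.ofFn_succ', List.prod_concat, Fin.snoc_castSucc, Fin.snoc_last]

lemma uProd_mem_of_forall_snoc_mem {I : TwoSidedIdeal (FreeAlgebra ℂ (E × E))} {ι : Type}
    [Fintype ι] (v w : ι → E) (hsum : ∑ i, u E (v i) (w i) - 1 ∈ I) {k : ℕ} {A B : Fin k → E}
    (h : ∀ i, uProd E (Fin.snoc A (v i)) (Fin.snoc B (w i)) ∈ I) : uProd E A B ∈ I := by
  have hexpand : uProd E A B = ∑ i, uProd E (Fin.snoc A (v i)) (Fin.snoc B (w i)) -
      uProd E A B * (∑ i, u E (v i) (w i) - 1) := by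
    simp only [uProd_snoc, ← Finset.mul_sum, mul_sub, mul_one, sub_sub_cancel]
  rw [hexpand]
  exact I.sub_mem (I.finsetSum_mem _ _ fun i _ => h i) (I.mul_mem_left _ _ hsum)

variable [Fintype E] {𝒜 : Set (Tup E)}

lemma symRels_subset_qIdeal : symRels E ⊆ qIdeal E 𝒜 :=
  fun _ hx => TwoSidedIdeal.subset_span (Or.inl hx)

lemma uProd_mem_qIdeal_of_xor {k : ℕ} {A B : Fin k → E} (h : Xor (⟨k, A⟩ ∈ 𝒜) (⟨k, B⟩ ∈ 𝒜)) :
    uProd E A B ∈ qIdeal E 𝒜 :=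
  TwoSidedIdeal.subset_span (Or.inr ⟨k, A, B, h, rfl⟩)

end QIdeal

section Tuples

variable {E : Type} {M : Matroid E}

lemma mem_circuitTuples_iff_of_ne_two {k : ℕ} (hk : k ≠ 2) {A : Fin k → E} :
    ⟨k, A⟩ ∈ circuitTuples M ↔ Function.Injective A ∧ IsCircuitSet M (Set.range A) :=
  ⟨fun h => h.resolve_left fun ⟨_, _, hA⟩ => hk (congrArg Sigma.fst hA), Or.inr⟩

lemma length_eq_of_mem_baseTuples {k : ℕ} {A : Fin k → E} (hA : ⟨k, A⟩ ∈ baseTuples M)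
    {B : Set E} (hB : M.IsBase B) : k = B.ncard := by
  rw [← hA.2.ncard_eq_ncard_of_isBase hB, Set.ncard_range_of_injective hA.1, Nat.card_fin]

lemma mem_circuitTuples_of_notMem_baseTuples [Finite E] (hM : M.IsSimple) {B₀ : Set E}
    (hB₀ : M.IsBase B₀) (h3 : B₀.ncard = 3) {B : Fin 3 → E} (hinj : Function.Injective B)
    (hB : ⟨3, B⟩ ∉ baseTuples M) : ⟨3, B⟩ ∈ circuitTuples M := by
  have hcard : (Set.range B).ncard = 3 := by simp [Set.ncard_range_of_injective hinj]
  have hdep : ¬ M.Indep (Set.range B) := fun hI =>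
    hB ⟨hinj, hI.isBase_of_ncard_eq hB₀ (hcard.trans h3.symm)⟩
  have hC := hM.isCircuit_of_ncard_eq_three (by simp [hM.ground_eq_univ]) hdep hcard
  exact (mem_circuitTuples_iff_of_ne_two (by decide)).mpr ⟨hinj, hC.isCircuitSet⟩

lemma exists_snoc_mem_circuitTuples (hM : M.IsSimple) (htri : M.NoCoveringTriangle)
    {A : Fin 3 → E} (hA : ⟨3, A⟩ ∈ baseTuples M) :
    ∃ e, ⟨4, Fin.snoc A e⟩ ∈ circuitTuples M := by
  obtain ⟨e, he, hC⟩ := hM.exists_isCircuit_insert_of_isBase htri hA.2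
    (by simp [Set.ncard_range_of_injective hA.1])
  refine ⟨e, (mem_circuitTuples_iff_of_ne_two (by decide)).mpr
    ⟨Fin.snoc_injective_of_injective hA.1 he, ?_⟩⟩
  rw [Fin.range_snoc]
  exact hC.isCircuitSet

end Tuples

lemma uProd_mem_qIdeal_circuitTuples_of_mem_baseTuples {E : Type} [Fintype E] {M : Matroid E}
    (hM : M.IsSimple) (hrank : ∃ B, M.IsBase B ∧ B.ncard = 3)
    (htri : M.NoCoveringTriangle) {k : ℕ} {A B : Fin k → E}
    (hA : ⟨k, A⟩ ∈ baseTuples M) (hB : ⟨k, B⟩ ∉ baseTuples M) :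
    uProd E A B ∈ qIdeal E (circuitTuples M) ∧ uProd E B A ∈ qIdeal E (circuitTuples M) := by
  obtain ⟨B₀, hB₀, h3⟩ := hrank
  obtain rfl : k = 3 := (length_eq_of_mem_baseTuples hA hB₀).trans h3
  have hAc : ⟨3, A⟩ ∉ circuitTuples M := fun h =>
    ((mem_circuitTuples_iff_of_ne_two (by decide)).mp h).2.1 hA.2.indep
  by_cases hinj : Function.Injective B
  · have hBc := mem_circuitTuples_of_notMem_baseTuples hM hB₀ h3 hinj hB
    exact ⟨uProd_mem_qIdeal_of_xor (Or.inr ⟨hBc, hAc⟩),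
      uProd_mem_qIdeal_of_xor (Or.inl ⟨hBc, hAc⟩)⟩
  obtain ⟨e, he⟩ := exists_snoc_mem_circuitTuples hM htri hA
  have hBc (d : E) : ⟨4, Fin.snoc B d⟩ ∉ circuitTuples M := fun h =>
    hinj (Fin.snoc_injective_iff.mp ((mem_circuitTuples_iff_of_ne_two (by decide)).mp h).1).1
  exact ⟨uProd_mem_of_forall_snoc_mem (fun _ => e) id (symRels_subset_qIdeal (Or.inr ⟨e, rfl⟩))
      fun d => uProd_mem_qIdeal_of_xor (Or.inl ⟨he, hBc d⟩),
    uProd_mem_of_forall_snoc_mem id (fun _ => e)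
      (symRels_subset_qIdeal (Or.inl (Or.inr ⟨e, rfl⟩)))
      fun d => uProd_mem_qIdeal_of_xor (Or.inr ⟨he, hBc d⟩)⟩

theorem qIdeal_base_le_qIdeal_circuit_general (E : Type) [Fintype E]
    (M : Matroid E)
    (hsimple : (∀ x : E, M.Indep {x}) ∧ ∀ x y : E, x ≠ y → M.Indep {x, y})
    (hrank3 : ∃ B : Set E, M.IsBase B ∧ B.ncard = 3)
    (htriangle : ∀ F₁ F₂ F₃ : Set E,
      Rank2Flat M F₁ → Rank2Flat M F₂ → Rank2Flat M F₃ →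
      (F₁ ∩ F₂).Nonempty → (F₁ ∩ F₃).Nonempty → (F₂ ∩ F₃).Nonempty →
      F₁ ∩ F₂ ∩ F₃ = ∅ →
      F₁ ∪ F₂ ∪ F₃ ≠ Set.univ) :
    qIdeal E (baseTuples M) ≤ qIdeal E (circuitTuples M) := by
  refine TwoSidedIdeal.span_le.mpr ?_
  rintro _ (hx | ⟨k, A, B, ⟨hA, hB⟩ | ⟨hB, hA⟩, rfl⟩)
  · exact symRels_subset_qIdeal hx
  · exact (uProd_mem_qIdeal_circuitTuples_of_mem_baseTuples hsimple hrank3 htriangle hA hB).1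
  · exact (uProd_mem_qIdeal_circuitTuples_of_mem_baseTuples hsimple hrank3 htriangle hB hA).2

/-- Let `M` be a simple rank-3 matroid on ground set `E`.  If
`E ≠ F₁ ∪ F₂ ∪ F₃` for every triangle `{F₁, F₂, F₃}` of `M`, then
`I(QAut_ℬ(M)) ⊆ I(QAut_𝒞(M))`, i.e. `QAut_𝒞(M) ≤ QAut_ℬ(M)`. -/
theorem qIdeal_base_le_qIdeal_circuit (E : Type) [Fintype E] [Nonempty E]
    (M : Matroid E) (hM : M.E = Set.univ)
    (hsimple : (∀ x : E, M.Indep {x}) ∧ ∀ x y : E, x ≠ y → M.Indep {x, y})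
    (hrank3 : ∃ B : Set E, M.IsBase B ∧ B.ncard = 3)
    (htriangle : ∀ F₁ F₂ F₃ : Set E,
      Rank2Flat M F₁ → Rank2Flat M F₂ → Rank2Flat M F₃ →
      (F₁ ∩ F₂).Nonempty → (F₁ ∩ F₃).Nonempty → (F₂ ∩ F₃).Nonempty →
      F₁ ∩ F₂ ∩ F₃ = ∅ →
      F₁ ∪ F₂ ∪ F₃ ≠ Set.univ) :
    qIdeal E (baseTuples M) ≤ qIdeal E (circuitTuples M) :=
  qIdeal_base_le_qIdeal_circuit_general E M hsimple hrank3 htriangle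

end
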